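/- Let (Y, d_s) be a semi-metric space and let T : CB(Y) → CB(Y) satisfy: there exists λ ∈ [0,1) such that H_s(T(U), T(V)) ≤ λ · M_T(U,V) for all U, V ∈ CB(Y). Then for every U ∈ CB(Y) and every n ∈ ℕ, H_s(Tⁿ(U), Tⁿ⁺¹(U)) ≤ λⁿ · H_s(U, T(U)). -/
import Mathlib


open Filter MeasureTheory

/-- `d` is a (Hausdorff) semi-metric on `Y`: nonnegative, vanishing exactly on the
diagonal, and symmetric. The triangle inequality is NOT assumed. -/
def IsSemiMetric {Y : Type*} (d : Y → Y → ℝ) : Prop :=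
  (∀ r t, 0 ≤ d r t) ∧ (∀ r t, d r t = 0 ↔ r = t) ∧ (∀ r t, d r t = d t r)

/-- Distance from a point to a set: `d_s(y, A) = inf {d_s(y,a) : a ∈ A}`. -/
noncomputable def semiDistSet {Y : Type*} (d : Y → Y → ℝ) (y : Y) (A : Set Y) : ℝ :=
  sInf ((d y) '' A)

/-- Membership in `CB(Y)`: nonempty, `d_s`-closed and bounded subsets of `Y`. -/
def IsCB {Y : Type*} (d : Y → Y → ℝ) (U : Set Y) : Prop :=
  U.Nonempty ∧ U = {y : Y | semiDistSet d y U = 0} ∧ BddAbove (Set.image2 d U U)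

/-- The Pompeiu–Hausdorff semi-metric on subsets of `Y`. -/
noncomputable def semiHaus {Y : Type*} (d : Y → Y → ℝ) (U V : Set Y) : ℝ :=
  max (sSup ((fun a => semiDistSet d a V) '' U)) (sSup ((fun b => semiDistSet d b U) '' V))

/-- The collection `CB(Y)` as a subtype. -/
def CB (Y : Type*) (d : Y → Y → ℝ) := {U : Set Y // IsCB d U}

/-- Pompeiu–Hausdorff semi-metric on `CB(Y)`. -/
noncomputable def HsCB {Y : Type*} (d : Y → Y → ℝ) (U V : CB Y d) : ℝ :=
  semiHaus d U.1 V.1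

/-- The quantity `M_T(U,V)` of the generalized rational graph contraction. -/
noncomputable def MT {Y : Type*} (d : Y → Y → ℝ) (T : CB Y d → CB Y d) (U V : CB Y d) : ℝ :=
  max (max (max (max (HsCB d U V) (HsCB d U (T U))) (HsCB d V (T V)))
      (HsCB d V (T V) * (1 + HsCB d U (T U)) / (1 + HsCB d U V)))
    (HsCB d V (T U) * (1 + HsCB d U (T U)) / (1 + HsCB d U V))

/-- There is an edge between the subsets `U` and `V`. -/
def EdgeBetween {Y : Type*} (E : Set (Y × Y)) (U V : Set Y) : Prop :=
  ∃ u ∈ U, ∃ v ∈ V, (u, v) ∈ E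

/-- There is a (directed) path between the subsets `U` and `V`. -/
def PathBetween {Y : Type*} (E : Set (Y × Y)) (U V : Set Y) : Prop :=
  ∃ n : ℕ, ∃ y : ℕ → Y, y 0 ∈ U ∧ y n ∈ V ∧ ∀ i < n, (y i, y (i + 1)) ∈ E

/-- `T : CB(Y) → CB(Y)` is a generalized rational graph `λ`-contraction. -/
def IsGenRationalGraphContraction {Y : Type*} (d : Y → Y → ℝ) (E : Set (Y × Y))
    (T : CB Y d → CB Y d) (l : ℝ) : Prop :=
  (∀ U V : CB Y d, EdgeBetween E U.1 V.1 → EdgeBetween E (T U).1 (T V).1) ∧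
  (∀ U V : CB Y d, PathBetween E U.1 V.1 → PathBetween E (T U).1 (T V).1) ∧
  0 ≤ l ∧ l < 1 ∧
  ∀ U V : CB Y d, HsCB d (T U) (T V) ≤ l * MT d T U V

/-- `(Y, d_s)` is `d_s`-Cauchy complete. -/
def DsCauchyComplete {Y : Type*} (d : Y → Y → ℝ) : Prop :=
  ∀ u : ℕ → Y, (∀ ε : ℝ, 0 < ε → ∃ N : ℕ, ∀ m ≥ N, ∀ n ≥ N, d (u m) (u n) < ε) →
    ∃ l : Y, Tendsto (fun n => d (u n) l) atTop (nhds 0)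

/-- The graph `G̃` (edges of `E` with direction forgotten) is (weakly) connected. -/
def WeaklyConnected {Y : Type*} (E : Set (Y × Y)) : Prop :=
  ∀ u v : Y, ∃ n : ℕ, ∃ y : ℕ → Y, y 0 = u ∧ y n = v ∧
    ∀ i < n, (y i, y (i + 1)) ∈ E ∨ (y (i + 1), y i) ∈ E

/-- Property `P*` of the graph `G` on `CB(Y)`. -/
def PropertyPStar {Y : Type*} (d : Y → Y → ℝ) (E : Set (Y × Y)) : Prop :=
  ∀ (U : ℕ → CB Y d) (L : CB Y d),
    Tendsto (fun n => HsCB d (U n) L) atTop (nhds 0) →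
    (∀ n : ℕ, EdgeBetween E (U n).1 (U (n + 1)).1) →
    ∃ φ : ℕ → ℕ, StrictMono φ ∧ ∀ k : ℕ, EdgeBetween E (U (φ k)).1 L.1

/-- `(Y, d_s)` is `ε`-chainable. -/
def EpsChainable {Y : Type*} (d : Y → Y → ℝ) (ε : ℝ) : Prop :=
  ∀ u v : Y, ∃ n : ℕ, ∃ y : ℕ → Y, y 0 = u ∧ y n = v ∧ ∀ i < n, d (y i) (y (i + 1)) < ε

/-- The class `Γ` of integrable comparison functions. -/
def MemGamma (γ : ℝ → ℝ) : Prop :=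
  (∀ t, 0 ≤ γ t) ∧ IntegrableOn γ (Set.Ici (0 : ℝ)) ∧
  (∀ K : Set ℝ, K ⊆ Set.Ici (0 : ℝ) → IsCompact K → IntegrableOn γ K) ∧
  ∀ ε : ℝ, 0 < ε → 0 < ∫ t in (0 : ℝ)..ε, γ t

lemma semiDistSet_nonneg' {Y : Type*} {d : Y → Y → ℝ} (hd : ∀ r t, 0 ≤ d r t)
    (y : Y) (A : Set Y) : 0 ≤ semiDistSet d y A :=
  Real.sInf_nonneg (by rintro x ⟨a, _, rfl⟩; exact hd y a)

lemma HsCB_nonneg' {Y : Type*} {d : Y → Y → ℝ} (hd : ∀ r t, 0 ≤ d r t)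
    (U V : CB Y d) : 0 ≤ HsCB d U V :=
  le_max_of_le_left (Real.sSup_nonneg
    (by rintro x ⟨a, _, rfl⟩; exact semiDistSet_nonneg' hd a V.1))

lemma HsCB_self' {Y : Type*} {d : Y → Y → ℝ} (hd : IsSemiMetric d)
    (U : CB Y d) : HsCB d U U = 0 := by
  have key : ∀ a ∈ U.1, semiDistSet d a U.1 = 0 := by
    intro a ha
    refine le_antisymm ?_ (semiDistSet_nonneg' hd.1 a U.1)
    have h0 : d a a = 0 := (hd.2.1 a a).mpr rfl
    calc sInf ((d a) '' U.1) ≤ d a a :=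
          csInf_le ⟨0, by rintro x ⟨b, _, rfl⟩; exact hd.1 a b⟩ ⟨a, ha, rfl⟩
      _ = 0 := h0
  have hsup : sSup ((fun a => semiDistSet d a U.1) '' U.1) = 0 := by
    refine le_antisymm (Real.sSup_le ?_ le_rfl)
      (Real.sSup_nonneg (by rintro x ⟨a, ha, rfl⟩; exact (key a ha).ge))
    rintro x ⟨a, ha, rfl⟩; exact (key a ha).le
  simp [HsCB, semiHaus, hsup]

lemma step_bound' {Y : Type*} {d : Y → Y → ℝ} (hd : IsSemiMetric d)
    (T : CB Y d → CB Y d) (l : ℝ) (hl0 : 0 ≤ l) (hl1 : l < 1)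
    (hT : ∀ U V : CB Y d, HsCB d (T U) (T V) ≤ l * MT d T U V)
    (A : CB Y d) : HsCB d (T A) (T (T A)) ≤ l * HsCB d A (T A) := by
  set a := HsCB d A (T A) with ha
  set b := HsCB d (T A) (T (T A)) with hb
  have ha0 : 0 ≤ a := HsCB_nonneg' hd.1 A (T A)
  have hb0 : 0 ≤ b := HsCB_nonneg' hd.1 (T A) (T (T A))
  have hself : HsCB d (T A) (T A) = 0 := HsCB_self' hd (T A)
  have hpos : (0:ℝ) < 1 + a := by linarith
  have hMT : MT d T A (T A) ≤ max a b := by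
    unfold MT
    rw [← ha, ← hb, hself]
    have e1 : b * (1 + a) / (1 + a) = b := by field_simp
    simp [e1, max_le_iff, le_max_iff, ha0, hb0]
  have h := (hT A (T A)).trans (mul_le_mul_of_nonneg_left hMT hl0)
  rw [← hb] at h
  rcases max_cases a b with ⟨hm, _⟩ | ⟨hm, hab⟩
  · rw [hm] at h; exact h
  · rw [hm] at h
    nlinarith

/-- For a map `T` satisfying the rational contraction inequality,
`H_s(Tⁿ(U), Tⁿ⁺¹(U)) ≤ λⁿ · H_s(U, T(U))`. -/
theorem iterate_succ_bound {Y : Type*} (d : Y → Y → ℝ) (hd : IsSemiMetric d)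
    (T : CB Y d → CB Y d) (l : ℝ) (hl0 : 0 ≤ l) (hl1 : l < 1)
    (hT : ∀ U V : CB Y d, HsCB d (T U) (T V) ≤ l * MT d T U V) :
    ∀ (U : CB Y d) (n : ℕ),
      HsCB d (T^[n] U) (T^[n + 1] U) ≤ l ^ n * HsCB d U (T U) := by
  intro U n
  induction n with
  | zero => simp
  | succ n ih =>
      have e1 : T^[n + 1] U = T (T^[n] U) := Function.iterate_succ_apply' T n U
      have e2 : T^[n + 2] U = T (T (T^[n] U)) := by
        rw [Function.iterate_succ_apply' T (n+1) U, e1]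
      calc HsCB d (T^[n + 1] U) (T^[n + 1 + 1] U)
          = HsCB d (T (T^[n] U)) (T (T (T^[n] U))) := by rw [e1, ← e2]
        _ ≤ l * HsCB d (T^[n] U) (T (T^[n] U)) :=
            step_bound' hd T l hl0 hl1 hT (T^[n] U)
        _ = l * HsCB d (T^[n] U) (T^[n + 1] U) := by rw [e1]
        _ ≤ l * (l ^ n * HsCB d U (T U)) := by
            exact mul_le_mul_of_nonneg_left ih hl0
        _ = l ^ (n + 1) * HsCB d U (T U) := by ring
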